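/- Let G be a pseudograph, H ⋖ G (i.e., H is a partial underlying pseudograph of an induced subgraph of G), and suppose a collection C is admissible to H. Then H = Γ_G(C). -/

import Mathlib

attribute [local instance] Classical.propDecidable

/-- An abstract simplicial complex on a vertex type `α` (faces are downward closed). -/
structure ASC (α : Type) where
  faces : Set (Finset α)
  down_closed : ∀ {s t : Finset α}, s ∈ faces → t ⊆ s → t ∈ faces

namespace ASC

variable {α β : Type}

/-- The geometric realization of an abstract simplicial complex, as the space of
convex-combination weight functions supported on a face. -/
def realization [Fintype α] (K : ASC α) : Type :=
  {f : α → ℝ // (∀ a, 0 ≤ f a) ∧ (∑ a, f a) = 1 ∧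
    (Finset.univ.filter fun a => f a ≠ 0) ∈ K.faces}

instance [Fintype α] (K : ASC α) : TopologicalSpace K.realization :=
  inferInstanceAs (TopologicalSpace {f : α → ℝ // _})

/-- `a` is a vertex of `K`. -/
def IsVertex (K : ASC α) (a : α) : Prop := {a} ∈ K.faces

/-- The complex `K \ St a`: all faces of `K` not containing `a`. -/
def delStar (K : ASC α) (a : α) : ASC α where
  faces := {s | s ∈ K.faces ∧ a ∉ s}
  down_closed := fun hs hts => ⟨K.down_closed hs.1 hts, fun hat => hs.2 (hts hat)⟩

/-- The link of a vertex `a` in `K`. -/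
def link (K : ASC α) (a : α) : ASC α where
  faces := {s | s ∈ K.faces ∧ a ∉ s ∧ insert a s ∈ K.faces}
  down_closed := fun hs hts =>
    ⟨K.down_closed hs.1 hts, fun hat => hs.2.1 (hts hat),
      K.down_closed hs.2.2 (Finset.insert_subset_insert _ hts)⟩

/-- The join of two abstract simplicial complexes. -/
def join (K : ASC α) (L : ASC β) : ASC (α ⊕ β) where
  faces := {s | ∃ u ∈ K.faces, ∃ v ∈ L.faces, s = u.image Sum.inl ∪ v.image Sum.inr}
  down_closed := by
    rintro s t ⟨u, hu, v, hv, rfl⟩ hts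
    refine ⟨u.filter (fun x => Sum.inl x ∈ t), K.down_closed hu (Finset.filter_subset _ _),
      v.filter (fun y => Sum.inr y ∈ t), L.down_closed hv (Finset.filter_subset _ _), ?_⟩
    ext x
    constructor
    · intro hx
      have hx' := hts hx
      simp only [Finset.mem_union, Finset.mem_image, Finset.mem_filter] at hx' ⊢
      rcases hx' with ⟨y, hy, rfl⟩ | ⟨y, hy, rfl⟩
      · exact Or.inl ⟨y, ⟨hy, hx⟩, rfl⟩
      · exact Or.inr ⟨y, ⟨hy, hx⟩, rfl⟩
    · intro hx
      simp only [Finset.mem_union, Finset.mem_image, Finset.mem_filter] at hx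
      rcases hx with ⟨y, ⟨hy, hyt⟩, rfl⟩ | ⟨y, ⟨hy, hyt⟩, rfl⟩ <;> exact hyt

/-- The join of a finite family of simplicial complexes on a common vertex type
(with pairwise disjoint vertex sets in applications). -/
def famJoin {ι : Type} [Fintype ι] (K : ι → ASC α) : ASC α where
  faces := {s | ∃ f : ι → Finset α, (∀ i, f i ∈ (K i).faces) ∧ s = Finset.univ.biUnion f}
  down_closed := by
    intro s t hs hts
    obtain ⟨f, hf, rfl⟩ := hs
    refine ⟨fun i => f i ∩ t, fun i => (K i).down_closed (hf i) Finset.inter_subset_left, ?_⟩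
    ext a
    simp only [Finset.mem_biUnion, Finset.mem_inter, Finset.mem_univ, true_and]
    constructor
    · intro ha
      obtain ⟨i, hi⟩ := Finset.mem_biUnion.1 (hts ha)
      exact ⟨i, hi.2, ha⟩
    · rintro ⟨i, hi, ha⟩
      exact ha

end ASC

/-! ## Pseudographs, tubes and tubing complexes -/

/-- An ambient multigraph structure without loops: each edge label in `E` is assigned an
unordered pair of distinct nodes of `V`. -/
structure Amb (V E : Type) where
  ends : E → Sym2 V
  noLoop : ∀ e, ¬ (ends e).IsDiag

variable {V E : Type} [Fintype V] [Fintype E] [DecidableEq V] [DecidableEq E]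

/-- A pseudograph (without loops) on nodes from `V` with edges from `E`: a subgraph of the
ambient structure `A`, given by a finite set of nodes and a finite set of edges whose
endpoints belong to the node set. -/
structure PSG (A : Amb V E) where
  verts : Finset V
  edges : Finset E
  incl : ∀ e ∈ edges, ∀ v ∈ A.ends e, v ∈ verts

namespace PSG

variable {A : Amb V E}

noncomputable instance : DecidableEq (PSG A) := Classical.decEq _

noncomputable instance : Fintype (PSG A) :=
  Fintype.ofInjective (fun H => (H.verts, H.edges))
    (by intro a b h; cases a; cases b; simp_all)

/-- The parallel class (possibly a bundle) of edges of `H` with endpoint pair `s`. -/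
def cls (H : PSG A) (s : Sym2 V) : Finset E :=
  H.edges.filter fun e => A.ends e = s

/-- `e` is a multiple edge of `H`. -/
def MultipleIn (H : PSG A) (e : E) : Prop :=
  e ∈ H.edges ∧ 2 ≤ (H.cls (A.ends e)).card

/-- `I` is a subgraph of `H`. -/
def Le (I H : PSG A) : Prop := I.verts ⊆ H.verts ∧ I.edges ⊆ H.edges

/-- Adjacency of two nodes via an edge of `H`. -/
def adjIn (H : PSG A) (v w : V) : Prop := ∃ e ∈ H.edges, A.ends e = s(v, w)

/-- Reachability inside `H`. -/
def reachIn (H : PSG A) : V → V → Prop := Relation.ReflTransGen (adjIn H)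

/-- `H` is a (nonempty) connected pseudograph. -/
def ConnIn (H : PSG A) : Prop :=
  H.verts.Nonempty ∧ ∀ v ∈ H.verts, ∀ w ∈ H.verts, reachIn H v w

/-- `I` is a semi-induced subgraph of `H`: it contains at least one edge between every
pair of its nodes joined by an edge of `H`. -/
def SemiInducedIn (H I : PSG A) : Prop :=
  Le I H ∧ ∀ e ∈ H.edges, (∀ v ∈ A.ends e, v ∈ I.verts) →
    ∃ e' ∈ I.edges, A.ends e' = A.ends e

/-- `J` is a connected component of `H`. -/
def IsComponent (H J : PSG A) : Prop :=
  Le J H ∧ J.verts.Nonempty ∧ ConnIn J ∧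
    (J.edges = H.edges.filter fun e => ∀ v ∈ A.ends e, v ∈ J.verts) ∧
    ∀ e ∈ H.edges, (∃ v ∈ A.ends e, v ∈ J.verts) → ∀ v ∈ A.ends e, v ∈ J.verts

/-- `I` is properly contained in its connected component of `H`. -/
def ProperIn (H I : PSG A) : Prop :=
  (∃ v ∈ H.verts, v ∉ I.verts ∧ ∃ w ∈ I.verts, reachIn H v w) ∨
    (∃ e ∈ H.edges, (∀ v ∈ A.ends e, v ∈ I.verts) ∧ e ∉ I.edges)

/-- `I` is a tube of `H`: a proper connected semi-induced subgraph of a connected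
component of `H`. -/
def TubeIn (H I : PSG A) : Prop := SemiInducedIn H I ∧ ConnIn I ∧ ProperIn H I

/-- Two subgraphs meet by separation in `H`: they are disjoint and no edge of `H`
connects them. -/
def SeparatedIn (H I J : PSG A) : Prop :=
  Disjoint I.verts J.verts ∧
    ∀ e ∈ H.edges, ¬ ((∃ v ∈ A.ends e, v ∈ I.verts) ∧ ∃ v ∈ A.ends e, v ∈ J.verts)

/-- Two tubes are compatible: they coincide, meet by inclusion, or meet by separation. -/
def Compatible (H I J : PSG A) : Prop :=
  I = J ∨ Le I J ∨ Le J I ∨ SeparatedIn H I J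

/-- The simplicial complex of all tubings of `H` (dual to the boundary of the pseudograph
associahedron `P_H`). -/
def tubingComplex (H : PSG A) : ASC (PSG A) where
  faces := {S | (∀ I ∈ S, TubeIn H I) ∧ ∀ I ∈ S, ∀ J ∈ S, Compatible H I J}
  down_closed := fun hs hts =>
    ⟨fun I hI => hs.1 I (hts hI), fun I hI J hJ => hs.2 I (hts hI) J (hts hJ)⟩

end PSG

/-- A collection of nodes and (multiple) edges, i.e. a candidate subset of `C_G`. -/
abbrev Coll (V E : Type) := Finset V × Finset E

namespace PSG

variable {A : Amb V E}

/-- The number of elements of the collection `C` belonging to the subgraph `I`,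
i.e. `|I ∩ C|`. -/
def interCard (I : PSG A) (C : Coll V E) : ℕ :=
  (I.verts ∩ C.1).card + (I.edges ∩ C.2).card

/-- `C ∈ 2^{C_G}_even`: `C` consists of nodes and multiple edges of `G`, with evenly many
nodes and evenly many edges from each bundle. -/
def EvenColl (G : PSG A) (C : Coll V E) : Prop :=
  C.1 ⊆ G.verts ∧ C.2 ⊆ G.edges ∧ (∀ e ∈ C.2, MultipleIn G e) ∧
    Even C.1.card ∧ ∀ s : Sym2 V, Even ((C.2 ∩ G.cls s).card)

/-- The subgraph `Γ̃_G(C)` of `G` induced by the nodes belonging to `C` or incident to an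
edge of `C`. -/
def GammaTilde (G : PSG A) (C : Coll V E) : PSG A where
  verts := G.verts.filter fun v => v ∈ C.1 ∨ ∃ e ∈ C.2, v ∈ A.ends e
  edges := G.edges.filter fun e => ∀ v ∈ A.ends e,
    v ∈ G.verts.filter fun v => v ∈ C.1 ∨ ∃ e ∈ C.2, v ∈ A.ends e
  incl := by
    intro e he v hv
    exact (Finset.mem_filter.1 he).2 v hv

/-- The simplicial complex `K^odd_{C,G}`: tubings of `G` consisting of tubes `I` with
`|I ∩ C|` odd. -/
def Kodd (G : PSG A) (C : Coll V E) : ASC (PSG A) where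
  faces := {S | S ∈ (tubingComplex G).faces ∧ ∀ I ∈ S, Odd (interCard I C)}
  down_closed := fun hs hts =>
    ⟨(tubingComplex G).down_closed hs.1 hts, fun I hI => hs.2 I (hts hI)⟩

/-- The subcomplex `K'_{C,G}` of `K^odd_{C,G}` on the tubes contained in `Γ̃_G(C)`. -/
def Kp (G : PSG A) (C : Coll V E) : ASC (PSG A) where
  faces := {S | S ∈ (Kodd G C).faces ∧ ∀ I ∈ S, Le I (GammaTilde G C)}
  down_closed := fun hs hts =>
    ⟨(Kodd _ _).down_closed hs.1 hts, fun I hI => hs.2 I (hts hI)⟩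

/-- The bundle condition on a tube `I`: for every bundle `B` of `Γ̃_G(C)` disjoint from
`C`, if both endpoints of `B` lie in `I` then `B ⊆ I`. -/
def BundleOK (G : PSG A) (C : Coll V E) (I : PSG A) : Prop :=
  ∀ s : Sym2 V, 2 ≤ ((GammaTilde G C).cls s).card →
    C.2 ∩ (GammaTilde G C).cls s = ∅ →
    (∀ v ∈ s, v ∈ I.verts) → (GammaTilde G C).cls s ⊆ I.edges

/-- The subcomplex `K''_{C,G}` of `K'_{C,G}` on the tubes satisfying the bundle
condition. -/
def Kpp (G : PSG A) (C : Coll V E) : ASC (PSG A) where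
  faces := {S | S ∈ (Kp G C).faces ∧ ∀ I ∈ S, BundleOK G C I}
  down_closed := fun hs hts =>
    ⟨(Kp _ _).down_closed hs.1 hts, fun I hI => hs.2 I (hts hI)⟩

/-- The restriction `C ∩ J` of a collection to a subgraph `J`. -/
def restrictColl (C : Coll V E) (J : PSG A) : Coll V E := (C.1 ∩ J.verts, C.2 ∩ J.edges)

/-- `C ∈ 2^{C_G}_even*`: moreover every connected component of `Γ̃_G(C)` is even with
respect to `C`. -/
def EvenStar (G : PSG A) (C : Coll V E) : Prop :=
  EvenColl G C ∧ ∀ J : PSG A, IsComponent (GammaTilde G C) J → Even (interCard J C)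

/-- The subgraph of `G` induced by a set `W` of nodes. -/
def inducedSub (G : PSG A) (W : Finset V) : PSG A where
  verts := W ∩ G.verts
  edges := G.edges.filter fun e => ∀ v ∈ A.ends e, v ∈ W ∩ G.verts
  incl := by
    intro e he v hv
    exact (Finset.mem_filter.1 he).2 v hv

/-- `H` is a partial underlying pseudograph of `H'`: it has the same nodes, and each
parallel class of `H'` is either kept entirely or replaced by a single (simple) edge. -/
def PartialUnderlying (H' H : PSG A) : Prop :=
  H.verts = H'.verts ∧ H.edges ⊆ H'.edges ∧
    ∀ s : Sym2 V, H'.cls s ⊆ H.edges ∨ (H.edges ∩ H'.cls s).card = 1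

/-- `H ⋖ G`: `H` is a partial underlying pseudograph of an induced subgraph of `G`. -/
def Lt (H G : PSG A) : Prop := ∃ W : Finset V, PartialUnderlying (inducedSub G W) H

/-- `H` is (a representative of) the pseudograph `Γ_G(C)`, obtained from `Γ̃_G(C)` by
replacing each bundle disjoint from `C` by a single simple edge. -/
def IsGammaOf (G : PSG A) (C : Coll V E) (H : PSG A) : Prop :=
  H.verts = (GammaTilde G C).verts ∧ H.edges ⊆ (GammaTilde G C).edges ∧
    ∀ s : Sym2 V,
      (((C.2 ∩ (GammaTilde G C).cls s).Nonempty ∨ ((GammaTilde G C).cls s).card ≤ 1) →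
        (GammaTilde G C).cls s ⊆ H.edges) ∧
      (C.2 ∩ (GammaTilde G C).cls s = ∅ → 2 ≤ ((GammaTilde G C).cls s).card →
        (H.edges ∩ (GammaTilde G C).cls s).card = 1)

/-- Admissibility of a collection `C` for a connected pseudograph `J`:
(a1) evenness, (a2) `C` contains every node not incident to a bundle, and
(a3) `C` meets every bundle. -/
def AdmissibleConn (J : PSG A) (C : Coll V E) : Prop :=
  Even ((C.1 ∩ J.verts).card) ∧ (∀ s : Sym2 V, Even ((C.2 ∩ J.cls s).card)) ∧
    (∀ v ∈ J.verts, (∀ s : Sym2 V, v ∈ s → (J.cls s).card ≤ 1) → v ∈ C.1) ∧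
    ∀ s : Sym2 V, 2 ≤ (J.cls s).card → (C.2 ∩ J.cls s).Nonempty

/-- `C` is an admissible collection of the pseudograph `H` (componentwise). -/
def Admissible (H : PSG A) (C : Coll V E) : Prop :=
  C.1 ⊆ H.verts ∧ C.2 ⊆ H.edges ∧ (∀ e ∈ C.2, MultipleIn H e) ∧
    ∀ J : PSG A, IsComponent H J → AdmissibleConn J C

end PSG

namespace PSG

variable {A : Amb V E}

lemma adjIn_symm {H : PSG A} {a b : V} (h : adjIn H a b) : adjIn H b a := by
  obtain ⟨e, he, hs⟩ := h
  exact ⟨e, he, by rw [hs, Sym2.eq_swap]⟩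

lemma mem_verts_of_adjIn {H : PSG A} {a b : V} (h : adjIn H a b) : b ∈ H.verts := by
  obtain ⟨e, he, hs⟩ := h
  exact H.incl e he b (by rw [hs]; exact Sym2.mem_mk_right a b)

lemma reachIn_symm {H : PSG A} {a b : V} (h : reachIn H a b) : reachIn H b a :=
  by
  haveI : Std.Symm (adjIn H) := ⟨fun _ _ => adjIn_symm⟩
  exact (Relation.ReflTransGen.symmetric (r := adjIn H)).symm _ _ h

lemma mem_verts_of_reachIn {H : PSG A} {a b : V} (ha : a ∈ H.verts)
    (h : reachIn H a b) : b ∈ H.verts := by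
  induction h with
  | refl => exact ha
  | tail _ hadj ih => exact mem_verts_of_adjIn hadj

/-- The connected component of `H` containing `v`. -/
noncomputable def compOf (H : PSG A) (v : V) : PSG A where
  verts := H.verts.filter fun w => reachIn H v w
  edges := H.edges.filter fun e => ∀ w ∈ A.ends e,
    w ∈ H.verts.filter fun w => reachIn H v w
  incl := fun e he w hw => (Finset.mem_filter.1 he).2 w hw

lemma mem_compOf {H : PSG A} {v w : V} :
    w ∈ (compOf H v).verts ↔ w ∈ H.verts ∧ reachIn H v w := Finset.mem_filter

lemma reachIn_compOf {H : PSG A} {v w : V} (hv : v ∈ H.verts)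
    (h : reachIn H v w) : reachIn (compOf H v) v w := by
  induction h with
  | refl => exact Relation.ReflTransGen.refl
  | @tail a b hva hadj ih =>
    refine ih.tail ?_
    obtain ⟨e, he, hs⟩ := hadj
    refine ⟨e, Finset.mem_filter.2 ⟨he, ?_⟩, hs⟩
    intro w hw
    rw [hs] at hw
    rcases Sym2.mem_iff.1 hw with rfl | rfl
    · exact mem_compOf.2 ⟨mem_verts_of_reachIn hv hva, hva⟩
    · exact mem_compOf.2 ⟨mem_verts_of_adjIn ⟨e, he, hs⟩, hva.tail ⟨e, he, hs⟩⟩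

lemma compOf_isComponent (H : PSG A) {v : V} (hv : v ∈ H.verts) :
    IsComponent H (compOf H v) := by
  have hvmem : v ∈ (compOf H v).verts := mem_compOf.2 ⟨hv, Relation.ReflTransGen.refl⟩
  refine ⟨⟨Finset.filter_subset _ _, Finset.filter_subset _ _⟩, ⟨v, hvmem⟩, ?_, rfl, ?_⟩
  · refine ⟨⟨v, hvmem⟩, ?_⟩
    intro a ha b hb
    have ha' := mem_compOf.1 ha
    have hb' := mem_compOf.1 hb
    exact (reachIn_symm (reachIn_compOf hv ha'.2)).trans (reachIn_compOf hv hb'.2)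
  · intro e he ⟨w, hw, hwJ⟩ u hu
    have hw' := mem_compOf.1 hwJ
    by_cases huw : u = w
    · exact huw ▸ hwJ
    · have hadj : adjIn H w u :=
        ⟨e, he, (Sym2.mem_and_mem_iff fun h => huw h.symm).1 ⟨hw, hu⟩⟩
      exact mem_compOf.2 ⟨mem_verts_of_adjIn hadj, hw'.2.tail hadj⟩

end PSG

open PSG in
/-- If `H ⋖ G` and `C` is admissible to `H`, then `H = Γ_G(C)`. -/
theorem stmt13 {V E : Type} [Fintype V] [Fintype E] [DecidableEq V] [DecidableEq E]
    {A : Amb V E} (G H : PSG A) (hHG : Lt H G) (C : Coll V E)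
    (hC : Admissible H C) :
    IsGammaOf G C H := by
  obtain ⟨W, hWv, hWe, hWcls⟩ := hHG
  obtain ⟨hC1, hC2, hCmul, hCadm⟩ := hC
  have hHsubG : H.verts ⊆ G.verts := by
    intro v hv
    rw [hWv] at hv
    exact (Finset.mem_inter.1 hv).2
  -- Step 1: vertex sets agree
  have hverts : H.verts = (GammaTilde G C).verts := by
    apply Finset.Subset.antisymm
    · intro v hv
      have hJ := compOf_isComponent H hv
      obtain ⟨_, _, ha2, ha3⟩ := hCadm _ hJ
      have hvJ : v ∈ (compOf H v).verts :=
        mem_compOf.2 ⟨hv, Relation.ReflTransGen.refl⟩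
      show v ∈ G.verts.filter _
      rw [Finset.mem_filter]
      refine ⟨hHsubG hv, ?_⟩
      by_cases h : ∀ s : Sym2 V, v ∈ s → ((compOf H v).cls s).card ≤ 1
      · exact Or.inl (ha2 v hvJ h)
      · push_neg at h
        obtain ⟨s, hvs, hcard⟩ := h
        obtain ⟨e, he⟩ := ha3 s (by omega)
        obtain ⟨heC, heJ⟩ := Finset.mem_inter.1 he
        have hends : A.ends e = s := (Finset.mem_filter.1 heJ).2
        exact Or.inr ⟨e, heC, hends ▸ hvs⟩
    · intro v hv
      rw [show (GammaTilde G C).verts = G.verts.filter _ from rfl, Finset.mem_filter] at hv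
      rcases hv.2 with h | ⟨e, heC, hve⟩
      · exact hC1 h
      · exact H.incl e (hC2 heC) v hve
  -- Γ̃ has the same edges as the induced subgraph on W
  have hVeq : (G.verts.filter fun v => v ∈ C.1 ∨ ∃ e ∈ C.2, v ∈ A.ends e)
      = W ∩ G.verts := by
    have h1 : H.verts = W ∩ G.verts := hWv
    rw [hverts] at h1
    exact h1
  have hedgesEq : (GammaTilde G C).edges = (inducedSub G W).edges := by
    show G.edges.filter _ = G.edges.filter _
    simp only [hVeq]
  have hHe : H.edges ⊆ (GammaTilde G C).edges := hedgesEq ▸ hWe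
  have hclsEq : ∀ s : Sym2 V, (GammaTilde G C).cls s = (inducedSub G W).cls s := by
    intro s
    show (GammaTilde G C).edges.filter _ = (inducedSub G W).edges.filter _
    rw [hedgesEq]
  have hHcls : ∀ s : Sym2 V, H.edges ∩ (GammaTilde G C).cls s = H.cls s := by
    intro s
    ext e
    simp only [Finset.mem_inter, cls, Finset.mem_filter]
    exact ⟨fun ⟨h1, _, h3⟩ => ⟨h1, h3⟩, fun ⟨h1, h2⟩ => ⟨h1, hHe h1, h2⟩⟩
  have hdich : ∀ s : Sym2 V, (GammaTilde G C).cls s ⊆ H.edges ∨ (H.edges ∩ (GammaTilde G C).cls s).card = 1 := by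
    intro s
    rcases hWcls s with h | h
    · exact Or.inl (by rw [hclsEq]; exact h)
    · exact Or.inr (by rw [hclsEq]; exact h)
  refine ⟨hverts, hHe, fun s => ⟨?_, ?_⟩⟩
  · -- condition (i)
    intro h
    rcases hdich s with hsub | hone
    · exact hsub
    · rcases h with ⟨e, he⟩ | hle
      · exfalso
        obtain ⟨heC, heΓ⟩ := Finset.mem_inter.1 he
        have hends : A.ends e = s := (Finset.mem_filter.1 heΓ).2
        have hm := (hCmul e heC).2
        rw [hends, ← hHcls s, hone] at hm
        omega
      · have h1 : (H.edges ∩ (GammaTilde G C).cls s).card ≤ ((GammaTilde G C).cls s).card :=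
          Finset.card_le_card Finset.inter_subset_right
        have h2 : ((GammaTilde G C).cls s).card ≤ (H.edges ∩ (GammaTilde G C).cls s).card := by omega
        have := Finset.eq_of_subset_of_card_le Finset.inter_subset_right h2
        rw [← this]
        exact Finset.inter_subset_left
  · -- condition (ii)
    intro hempty hcard2
    rcases hdich s with hsub | hone
    · exfalso
      have hΓH : H.edges ∩ (GammaTilde G C).cls s = (GammaTilde G C).cls s := Finset.inter_eq_right.2 hsub
      have hHclsEq : H.cls s = (GammaTilde G C).cls s := by rw [← hHcls s, hΓH]
      -- pick an edge of the bundle and a vertex of `s`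
      obtain ⟨e, he⟩ : ((GammaTilde G C).cls s).Nonempty := Finset.card_pos.1 (by omega)
      have heH : e ∈ H.edges := hsub he
      have hends : A.ends e = s := (Finset.mem_filter.1 he).2
      set v := s.out.1 with hvdef
      have hvs : v ∈ s := Sym2.out_fst_mem s
      have hvH : v ∈ H.verts := H.incl e heH v (hends ▸ hvs)
      have hJ := compOf_isComponent H hvH
      obtain ⟨_, _, _, ha3⟩ := hCadm _ hJ
      -- every vertex of `s` lies in the component of `v`
      have hsJ : ∀ w ∈ s, w ∈ (compOf H v).verts := by
        intro w hws
        by_cases hwv : w = v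
        · rw [hwv]; exact mem_compOf.2 ⟨hvH, Relation.ReflTransGen.refl⟩
        · have hadj : adjIn H v w :=
            ⟨e, heH, by
              rw [hends]
              exact (Sym2.mem_and_mem_iff fun h => hwv h.symm).1 ⟨hvs, hws⟩⟩
          exact mem_compOf.2
            ⟨mem_verts_of_adjIn hadj, Relation.ReflTransGen.refl.tail hadj⟩
      have hJcls : (compOf H v).cls s = H.cls s := by
        ext e'
        constructor
        · intro h
          have h' := Finset.mem_filter.1 h
          exact Finset.mem_filter.2 ⟨(Finset.mem_filter.1 h'.1).1, h'.2⟩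
        · intro h
          have h' := Finset.mem_filter.1 h
          refine Finset.mem_filter.2 ⟨Finset.mem_filter.2 ⟨h'.1, ?_⟩, h'.2⟩
          intro w hw
          exact hsJ w (h'.2 ▸ hw)
      have h2 : 2 ≤ ((compOf H v).cls s).card := by
        rw [hJcls, hHclsEq]; exact hcard2
      obtain ⟨e'', he''⟩ := ha3 s h2
      obtain ⟨he''C, he''J⟩ := Finset.mem_inter.1 he''
      have : e'' ∈ C.2 ∩ (GammaTilde G C).cls s := by
        refine Finset.mem_inter.2 ⟨he''C, ?_⟩
        rw [← hHclsEq, ← hJcls]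
        exact he''J
      rw [hempty] at this
      exact absurd this (Finset.notMem_empty e'')
    · exact hone
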